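/- Let n ≥ 3 and consider the building-block graph B_n with nodes a_1,…,a_n and b_1,…,b_{n-1}, where for each i ∈ {1,…,n−1} there is an edge (a_i, a_{i+1}) with delay 1 and edges (a_i, b_i), (b_i, a_{i+1}) with delay 0, and all edges have capacity 1. Then the minimum, over all feasible integer flows of rate R = 2 from a_1 to a_n, of the maximum delay D(f) equals ⌈(n−1)/2⌉. -/

import Mathlib

/-- A directed network: each edge has a source node, a destination node,
a non-negative integer capacity and a non-negative integer delay. -/
structure Network (V : Type) (E : Type) where
  src : E → V
  dst : E → V
  cap : E → ℕ
  delay : E → ℕ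

namespace Network

variable {V E : Type}

/-- `N.IsPath s t p` : the list of edges `p` forms a directed path from `s` to `t`. -/
def IsPath (N : Network V E) : V → V → List E → Prop
  | s, t, [] => s = t
  | s, t, e :: es => N.src e = s ∧ N.IsPath (N.dst e) t es

/-- The delay of a path: the sum of the delays of its edges. -/
def pathDelay (N : Network V E) (p : List E) : ℕ := (p.map N.delay).sum

end Network

/-- A (path-based) flow from `s` to `t`: a finitely-supported assignment of
non-negative rates to `s`–`t` paths. -/
structure PathFlow {V E : Type} (N : Network V E) (s t : V) where
  f : List E →₀ ℝ
  nonneg : ∀ p, 0 ≤ f p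
  isPath : ∀ p ∈ f.support, N.IsPath s t p

namespace PathFlow

variable {V E : Type} [DecidableEq E] {N : Network V E} {s t : V}

/-- Total rate of the flow. -/
noncomputable def totalRate (F : PathFlow N s t) : ℝ := ∑ p ∈ F.f.support, F.f p

/-- Rate carried by edge `e`: the sum of the rates of all paths containing `e`. -/
noncomputable def edgeRate (F : PathFlow N s t) (e : E) : ℝ :=
  ∑ p ∈ F.f.support, if e ∈ p then F.f p else 0

/-- Feasibility with rate `R`: total rate is `R` and every edge capacity is respected. -/
def Feasible (F : PathFlow N s t) (R : ℝ) : Prop :=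
  F.totalRate = R ∧ ∀ e, F.edgeRate e ≤ (N.cap e : ℝ)

/-- The maximum delay over flow-carrying paths. -/
def maxDelay (F : PathFlow N s t) : ℕ := F.f.support.sup N.pathDelay

/-- An integer flow assigns a non-negative integer rate to every path. -/
def IsInteger (F : PathFlow N s t) : Prop := ∀ p, ∃ m : ℕ, F.f p = (m : ℝ)

end PathFlow
/-- Nodes of the partition-reduction graph `G'`: `Sum.inl i` is `w_i` (`i = 0,…,n`),
`Sum.inr i` is `v_{i+1}` (`i = 0,…,n-1`). -/
abbrev GV (n : ℕ) := Fin (n + 1) ⊕ Fin n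

/-- Edges of `G'`: `Sum.inl i` is the direct edge `(w_i, w_{i+1})` of delay `a i`;
`Sum.inr (Sum.inl i)` is `(w_i, v_{i+1})` and `Sum.inr (Sum.inr i)` is `(v_{i+1}, w_{i+1})`,
both of delay `0`. All edges have capacity `1`. -/
abbrev GE (n : ℕ) := Fin n ⊕ (Fin n ⊕ Fin n)

/-- The graph `G'` reduced from the partition problem. -/
def Gpart (n : ℕ) (a : Fin n → ℕ) : Network (GV n) (GE n) where
  src
    | Sum.inl i => Sum.inl i.castSucc
    | Sum.inr (Sum.inl i) => Sum.inl i.castSucc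
    | Sum.inr (Sum.inr i) => Sum.inr i
  dst
    | Sum.inl i => Sum.inl i.succ
    | Sum.inr (Sum.inl i) => Sum.inr i
    | Sum.inr (Sum.inr i) => Sum.inl i.succ
  cap := fun _ => 1
  delay
    | Sum.inl i => a i
    | Sum.inr _ => 0

/-- The building-block graph `B_n` of Fig. 3: spine nodes `a_1,…,a_n`
(`Sum.inl i` = `a_{i+1}`) and detour nodes `b_1,…,b_{n-1}` (`Sum.inr i` = `b_{i+1}`);
for each of the `n - 1` layers there is a direct edge `(a_i, a_{i+1})` of delay `1` and
a zero-delay two-edge route `(a_i, b_i), (b_i, a_{i+1})`; all edges have capacity `1`. -/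
abbrev Bblock (n : ℕ) : Network (GV (n - 1)) (GE (n - 1)) :=
  Gpart (n - 1) (fun _ => 1)

/-- The source `a_1` of `B_n`. -/
abbrev BblockSrc (n : ℕ) : GV (n - 1) := Sum.inl 0

/-- The sink `a_n` of `B_n`. -/
abbrev BblockSink (n : ℕ) : GV (n - 1) := Sum.inl (Fin.last (n - 1))

/-!
Every `a_1`–`a_n` path crosses layer `i` through its direct edge or its detour, and the detour
has capacity `1`, so each of the `n - 1` unit-delay direct edges carries rate at least
`R - 1 = 1`. Summing over these edges and regrouping by paths,
`n - 1 ≤ ∑_p d^p f^p ≤ D(f) · R = 2 D(f)`. Conversely, one unit along the path taking the direct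
edges of the first `⌈(n-1)/2⌉` layers and one unit along the complementary path form an
edge-disjoint integer flow of maximum delay `⌈(n-1)/2⌉`.
-/

open Finset

theorem Finsupp.support_single_add_single_of_pos {α : Type*} [DecidableEq α] (p q : α) {a b : ℝ}
    (ha : 0 < a) (hb : 0 < b) : (single p a + single q b).support = {p, q} := by
  ext r
  simp only [mem_support_iff, add_apply, single_apply, mem_insert, mem_singleton]
  split_ifs <;> simp_all [eq_comm] <;> linarith

namespace Network

variable {V E : Type} {N : Network V E}

theorem IsPath.append {s u t : V} {p q : List E} (hp : N.IsPath s u p) (hq : N.IsPath u t q) :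
    N.IsPath s t (p ++ q) := by
  induction p generalizing s with
  | nil => cases hp; exact hq
  | cons e es ih => exact ⟨hp.1, ih hp.2⟩

theorem isPath_flatMap_finRange {m : ℕ} (v : Fin (m + 1) → V) (q : Fin m → List E)
    (hq : ∀ i, N.IsPath (v i.castSucc) (v i.succ) (q i)) :
    N.IsPath (v 0) (v (Fin.last m)) ((List.finRange m).flatMap q) := by
  induction m with
  | zero => rfl
  | succ m ih =>
    rw [List.finRange_succ, List.flatMap_cons, List.flatMap_map]
    exact (hq 0).append (ih (v ∘ Fin.succ) (q ∘ Fin.succ) fun i => hq i.succ)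

theorem IsPath.exists_mem_crossing (φ : V → ℕ) {x : ℕ} {s t : V} {p : List E}
    (hp : N.IsPath s t p) (hs : φ s ≤ x) (ht : x < φ t) :
    ∃ e ∈ p, φ (N.src e) ≤ x ∧ x < φ (N.dst e) := by
  induction p generalizing s with
  | nil => cases hp; omega
  | cons e es ih =>
    obtain ⟨rfl, hes⟩ := hp
    by_cases he : x < φ (N.dst e)
    · exact ⟨e, List.mem_cons_self, hs, he⟩
    · obtain ⟨e', he', h⟩ := ih hes (by omega)
      exact ⟨e', List.mem_cons_of_mem _ he', h⟩

theorem card_filter_mem_le_pathDelay [DecidableEq E] (S : Finset E)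
    (hS : ∀ e ∈ S, 1 ≤ N.delay e) (p : List E) : #{e ∈ S | e ∈ p} ≤ N.pathDelay p := by
  calc #{e ∈ S | e ∈ p}
      ≤ ∑ e ∈ S with e ∈ p, N.delay e :=
        (card_eq_sum_ones _).trans_le (sum_le_sum fun e he => hS e (mem_filter.1 he).1)
    _ ≤ ∑ e ∈ p.toFinset, N.delay e := sum_le_sum_of_subset fun e he => by simp_all
    _ ≤ ∑ e ∈ p.toFinset, p.count e • N.delay e := sum_le_sum fun e he =>
          Nat.le_mul_of_pos_left _ (List.count_pos_iff.2 (List.mem_toFinset.1 he))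
    _ = N.pathDelay p := (sum_list_map_count p N.delay).symm

end Network

namespace PathFlow

variable {V E : Type} {N : Network V E} {s t : V} {p q : List E}

noncomputable def pair (hp : N.IsPath s t p) (hq : N.IsPath s t q) : PathFlow N s t where
  f := Finsupp.single p 1 + Finsupp.single q 1
  nonneg r := by
    classical
    simp only [Finsupp.add_apply, Finsupp.single_apply]
    split_ifs <;> norm_num
  isPath r hr := by
    classical
    rw [Finsupp.support_single_add_single_of_pos p q one_pos one_pos, mem_insert,
      mem_singleton] at hr
    rcases hr with rfl | rfl
    exacts [hp, hq]

section Pair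

variable (hp : N.IsPath s t p) (hq : N.IsPath s t q)

theorem pair_isInteger : (pair hp hq).IsInteger := fun r =>
  ⟨(Finsupp.single p 1 + Finsupp.single q 1 : List E →₀ ℕ) r, by
    classical
    simp only [pair, Finsupp.add_apply, Finsupp.single_apply]
    split_ifs <;> norm_num⟩

theorem totalRate_pair : (pair hp hq).totalRate = 2 := by
  show Finsupp.sum (Finsupp.single p 1 + Finsupp.single q 1) (fun _ x => x) = 2
  rw [Finsupp.sum_add_index' (fun _ => rfl) (fun _ _ _ => rfl), Finsupp.sum_single_index rfl,
    Finsupp.sum_single_index rfl, one_add_one_eq_two]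

variable [DecidableEq E]

theorem maxDelay_pair : (pair hp hq).maxDelay = max (N.pathDelay p) (N.pathDelay q) := by
  rw [maxDelay, pair, Finsupp.support_single_add_single_of_pos p q one_pos one_pos, sup_insert,
    sup_singleton]

theorem edgeRate_pair (e : E) :
    (pair hp hq).edgeRate e = (if e ∈ p then 1 else 0) + (if e ∈ q then 1 else 0) := by
  show Finsupp.sum (Finsupp.single p 1 + Finsupp.single q 1)
    (fun r x => if e ∈ r then x else 0) = _
  simp [Finsupp.sum_add_index', ite_add_zero]

theorem feasible_pair (hdisj : ∀ e ∈ p, e ∉ q) (hcap : ∀ e, 1 ≤ N.cap e) :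
    (pair hp hq).Feasible 2 := by
  refine ⟨totalRate_pair hp hq, fun e => ?_⟩
  rw [edgeRate_pair]
  have hcap : (1 : ℝ) ≤ N.cap e := by exact_mod_cast hcap e
  by_cases hep : e ∈ p
  · simpa [hep, hdisj e hep] using hcap
  · split_ifs <;> simp [hcap]

end Pair

variable [DecidableEq E]

theorem totalRate_le_sum_edgeRate (F : PathFlow N s t) (C : Finset E)
    (hC : ∀ p ∈ F.f.support, ∃ e ∈ C, e ∈ p) : F.totalRate ≤ ∑ e ∈ C, F.edgeRate e := by
  unfold totalRate edgeRate
  rw [sum_comm]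
  refine sum_le_sum fun p hp => ?_
  obtain ⟨e, heC, hep⟩ := hC p hp
  calc F.f p = if e ∈ p then F.f p else 0 := (if_pos hep).symm
    _ ≤ ∑ e ∈ C, if e ∈ p then F.f p else 0 :=
      single_le_sum (f := fun e => if e ∈ p then F.f p else 0)
        (fun _ _ => by split_ifs <;> simp [F.nonneg]) heC

theorem sum_edgeRate_le_maxDelay_mul (F : PathFlow N s t) (S : Finset E)
    (hS : ∀ e ∈ S, 1 ≤ N.delay e) : ∑ e ∈ S, F.edgeRate e ≤ F.maxDelay * F.totalRate := by
  unfold totalRate edgeRate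
  rw [sum_comm, mul_sum]
  refine sum_le_sum fun p hp => ?_
  calc ∑ e ∈ S, (if e ∈ p then F.f p else 0)
      = #{e ∈ S | e ∈ p} * F.f p := by rw [← sum_filter, sum_const, nsmul_eq_mul]
    _ ≤ F.maxDelay * F.f p := by
      gcongr
      · exact F.nonneg p
      · exact (N.card_filter_mem_le_pathDelay S hS p).trans (le_sup hp)

end PathFlow

namespace Gpart

variable {m : ℕ}

/-- Position along `w_0, v_1, w_1, …, v_m, w_m`: the edges crossing position `2 i` are exactly
the direct edge and the first detour edge of layer `i`. -/
def rank : GV m → ℕ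
  | Sum.inl k => 2 * k
  | Sum.inr k => 2 * k + 1

theorem mem_or_mem_of_isPath (a : Fin m → ℕ) {p : List (GE m)}
    (hp : (Gpart m a).IsPath (Sum.inl 0) (Sum.inl (Fin.last m)) p) (i : Fin m) :
    Sum.inl i ∈ p ∨ Sum.inr (Sum.inl i) ∈ p := by
  obtain ⟨e, he, hsrc, hdst⟩ :=
    hp.exists_mem_crossing rank (x := 2 * i) (by simp [rank]) (by simp [rank])
  rcases e with j | j | j <;>
    simp only [Gpart, rank, Fin.val_castSucc, Fin.val_succ] at hsrc hdst
  · exact .inl (by rwa [show j = i by omega] at he)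
  · exact .inr (by rwa [show j = i by omega] at he)
  · omega

theorem mul_sub_one_le_maxDelay_mul {a : Fin m → ℕ} (ha : ∀ i, 1 ≤ a i) {R : ℝ}
    (F : PathFlow (Gpart m a) (Sum.inl 0) (Sum.inl (Fin.last m))) (hF : F.Feasible R) :
    m * (R - 1) ≤ F.maxDelay * R := by
  have hlayer (i : Fin m) : R - 1 ≤ F.edgeRate (Sum.inl i) := by
    have hcut := F.totalRate_le_sum_edgeRate {Sum.inl i, Sum.inr (Sum.inl i)} fun p hp => by
      simpa using mem_or_mem_of_isPath a (F.isPath p hp) i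
    rw [sum_pair Sum.inl_ne_inr, hF.1] at hcut
    have hdetour : F.edgeRate (Sum.inr (Sum.inl i)) ≤ 1 := by
      simpa [Gpart] using hF.2 (Sum.inr (Sum.inl i))
    linarith
  calc m * (R - 1) = ∑ i : Fin m, (R - 1) := by
        rw [sum_const, card_univ, Fintype.card_fin, nsmul_eq_mul]
    _ ≤ ∑ i : Fin m, F.edgeRate (Sum.inl i) := sum_le_sum fun i _ => hlayer i
    _ = ∑ e ∈ univ.map .inl, F.edgeRate e := (sum_map univ .inl F.edgeRate).symm
    _ ≤ F.maxDelay * F.totalRate := F.sum_edgeRate_le_maxDelay_mul _ (by simpa [Gpart] using ha)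
    _ = F.maxDelay * R := by rw [hF.1]

variable (c : Fin m → Prop) [DecidablePred c]

def layerPath : List (GE m) :=
  (List.finRange m).flatMap fun i =>
    if c i then [Sum.inl i] else [Sum.inr (Sum.inl i), Sum.inr (Sum.inr i)]

theorem isPath_layerPath (a : Fin m → ℕ) :
    (Gpart m a).IsPath (Sum.inl 0) (Sum.inl (Fin.last m)) (layerPath c) :=
  Network.isPath_flatMap_finRange Sum.inl _ fun i => by
    split_ifs <;> exact ⟨rfl, by simp [Network.IsPath, Gpart]⟩

theorem pathDelay_layerPath (a : Fin m → ℕ) :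
    (Gpart m a).pathDelay (layerPath c) = ∑ i with c i, a i := by
  rw [Network.pathDelay, layerPath, List.map_flatMap, List.flatMap_def, List.sum_flatten,
    List.map_map, sum_filter, Fin.sum_univ_def]
  congr 1
  refine List.map_congr_left fun i _ => ?_
  split_ifs with hc <;> simp [hc, Gpart]

theorem not_mem_layerPath_not {e : GE m} (he : e ∈ layerPath c) :
    e ∉ layerPath fun i => ¬ c i := by
  simp only [layerPath, List.mem_flatMap, List.mem_finRange, true_and] at he ⊢
  rintro ⟨j, hj⟩
  obtain ⟨i, hi⟩ := he
  split_ifs at hi hj <;> aesop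

end Gpart

theorem bblock_int_min_max_delay_general (n : ℕ) :
    IsLeast {D : ℕ | ∃ F : PathFlow (Bblock n) (BblockSrc n) (BblockSink n),
        F.IsInteger ∧ F.Feasible 2 ∧ F.maxDelay = D}
      ((n - 1 + 1) / 2) := by
  constructor
  · have hp := Gpart.isPath_layerPath (fun i : Fin (n - 1) => i < (n - 1 + 1) / 2) fun _ => 1
    have hq := Gpart.isPath_layerPath (fun i : Fin (n - 1) => ¬ i < (n - 1 + 1) / 2) fun _ => 1
    refine ⟨.pair hp hq, PathFlow.pair_isInteger hp hq,
      PathFlow.feasible_pair hp hq (fun _ => Gpart.not_mem_layerPath_not _) fun _ => le_rfl, ?_⟩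
    have hsplit := card_filter_add_card_filter_not (s := univ)
      fun i : Fin (n - 1) => i < (n - 1 + 1) / 2
    rw [PathFlow.maxDelay_pair, Gpart.pathDelay_layerPath, Gpart.pathDelay_layerPath]
    simp only [sum_const, smul_eq_mul, mul_one, card_univ, Fintype.card_fin,
      Fin.card_filter_val_lt] at hsplit ⊢
    omega
  · rintro D ⟨F, -, hF, rfl⟩
    have h := Gpart.mul_sub_one_le_maxDelay_mul (fun _ => le_rfl) F hF
    norm_num at h
    have : n - 1 ≤ F.maxDelay * 2 := by exact_mod_cast h
    omega

/-- **Lemma 2.** For `n ≥ 3`, the minimum over all feasible integer flows of rate `R = 2`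
from `a_1` to `a_n` in `B_n` of the maximum delay `D(f)` equals `⌈(n-1)/2⌉`. -/
theorem bblock_int_min_max_delay (n : ℕ) (hn : 3 ≤ n) :
    IsLeast {D : ℕ | ∃ F : PathFlow (Bblock n) (BblockSrc n) (BblockSink n),
        F.IsInteger ∧ F.Feasible 2 ∧ F.maxDelay = D}
      ((n - 1 + 1) / 2) :=
  bblock_int_min_max_delay_general n
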